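/- For all integers n ≥ 3, \sum_{l=0}^{n} \binom{n}{l} B_l HB_{n-l}^{(ν,k-1)}(x) = (n+1) HB_n^{(ν,k)}(x) − n(x + 1/2) HB_{n-1}^{(ν,k)}(x) + n(n-1)(ν + 1/12) HB_{n-2}^{(ν,k)}(x) + \sum_{l=0}^{n-3} \binom{n}{l} B_{n-l} HB_l^{(ν,k)}(x), where B_l are the ordinary Bernoulli numbers (with B_1 = -1/2). -/

import Mathlib

open PowerSeries Finset

/-- The power series e^{-t}. -/
noncomputable def expNeg : PowerSeries ℝ := rescale (-1) (PowerSeries.exp ℝ)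

/-- Li_k(1-e^{-t})/(1-e^{-t}) = ∑_{m≥0} (1-e^{-t})^m/(m+1)^k as a formal power series. -/
noncomputable def pbGF (k : ℤ) : PowerSeries ℝ :=
  PowerSeries.mk fun n => ∑ m ∈ Finset.range (n + 1),
    (1 / ((m : ℝ) + 1) ^ k) * PowerSeries.coeff n ((1 - expNeg) ^ m)

/-- The power series e^{-ν t²/2}. -/
noncomputable def hermGF (ν : ℝ) : PowerSeries ℝ :=
  PowerSeries.mk fun n =>
    if Even n then (-ν / 2) ^ (n / 2) / (Nat.factorial (n / 2)) else 0

/-- Hermite and poly-Bernoulli mixed-type polynomials. -/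
noncomputable def HB (ν : ℝ) (k : ℤ) (n : ℕ) (x : ℝ) : ℝ :=
  (Nat.factorial n) *
    PowerSeries.coeff n (hermGF ν * pbGF k * rescale x (PowerSeries.exp ℝ))

/-- Poly-Bernoulli polynomials. -/
noncomputable def pB (k : ℤ) (n : ℕ) (x : ℝ) : ℝ :=
  (Nat.factorial n) * PowerSeries.coeff n (pbGF k * rescale x (PowerSeries.exp ℝ))

/-- Hermite polynomials of order ν. -/
noncomputable def Herm (ν : ℝ) (n : ℕ) (x : ℝ) : ℝ :=
  (Nat.factorial n) * PowerSeries.coeff n (hermGF ν * rescale x (PowerSeries.exp ℝ))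

/-- Stirling numbers of the second kind. -/
def S2 : ℕ → ℕ → ℕ
  | 0, 0 => 1
  | 0, _ + 1 => 0
  | _ + 1, 0 => 0
  | n + 1, m + 1 => (m + 1) * S2 n (m + 1) + S2 n m

/-!
Write `F_k = e^{-νt²/2} P_k(t) e^{xt}` with `P_k = ∑ₘ zᵐ/(m+1)ᵏ` and `z = 1 - e^{-t}`. Since
`(e^t - 1) d/dt` acts as `z d/dz`, we get `P_{k-1} = P_k + (e^t - 1) P_k'`. Multiplying `F_{k-1}` by
the Bernoulli series `t/(e^t - 1)` turns `(e^t - 1) P_k'` into `t P_k'`, and by the product rule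
`t e^{-νt²/2} P_k' e^{xt} = t F_k' - (x - νt) t F_k`. Comparing coefficients of `tⁿ/n!` and splitting
`B₀, B₁, B₂` off the Bernoulli convolution gives the identity.
-/

section EGF

variable {R : Type*} [CommSemiring R]

theorem factorial_mul_coeff_mul (f g : R⟦X⟧) (n : ℕ) :
    (n.factorial : R) * coeff n (f * g) = ∑ i ∈ range (n + 1),
      (n.choose i : R) * (i.factorial * coeff i f) * ((n - i).factorial * coeff (n - i) g) := by
  rw [coeff_mul, Nat.sum_antidiagonal_eq_sum_range_succ_mk, mul_sum]
  refine sum_congr rfl fun i hi => ?_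
  have h := Nat.choose_mul_factorial_mul_factorial (Nat.le_of_lt_succ (mem_range.mp hi))
  rw [← h]
  push_cast
  ring

theorem factorial_mul_coeff_X_mul (f : R⟦X⟧) (n : ℕ) :
    (n.factorial : R) * coeff n (X * f) = n * ((n - 1).factorial * coeff (n - 1) f) := by
  cases n with
  | zero => simp
  | succ n =>
    rw [coeff_succ_X_mul, Nat.factorial_succ, Nat.add_sub_cancel]
    push_cast
    ring

theorem coeff_X_mul_derivative (f : R⟦X⟧) (n : ℕ) :
    coeff n (X * d⁄dX R f) = n * coeff n f := by
  cases n with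
  | zero => simp
  | succ n =>
    rw [coeff_succ_X_mul, coeff_derivative]
    push_cast
    ring

theorem derivative_rescale (a : R) (f : R⟦X⟧) :
    d⁄dX R (rescale a f) = C a * rescale a (d⁄dX R f) := by
  ext n
  rw [coeff_derivative, coeff_C_mul, coeff_rescale, coeff_rescale, coeff_derivative, pow_succ]
  ring

end EGF

section Bernoulli

variable {K : Type*} [Field K] [CharZero K]

theorem factorial_mul_coeff_bernoulliPowerSeries (n : ℕ) :
    (n.factorial : K) * coeff n (bernoulliPowerSeries K) = bernoulli n := by
  rw [bernoulliPowerSeries, coeff_mk, eq_ratCast]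
  push_cast
  exact mul_div_cancel₀ _ (Nat.cast_ne_zero.mpr n.factorial_ne_zero)

theorem sum_choose_bernoulli_mul_eq (a : ℕ → K) {n : ℕ} (hn : 2 ≤ n) :
    ∑ l ∈ range (n + 1), (n.choose l : K) * bernoulli l * a (n - l) =
      ∑ l ∈ range (n - 2), (n.choose l : K) * bernoulli (n - l) * a l +
        n * (n - 1) / 12 * a (n - 2) - n / 2 * a (n - 1) + a n := by
  obtain ⟨m, rfl⟩ : ∃ m, n = m + 2 := ⟨n - 2, by omega⟩
  rw [← sum_range_reflect]
  have hsymm : ∀ l ∈ range (m + 2 + 1), ((m + 2).choose (m + 2 + 1 - 1 - l) : K) *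
      bernoulli (m + 2 + 1 - 1 - l) * a (m + 2 - (m + 2 + 1 - 1 - l)) =
      ((m + 2).choose l : K) * bernoulli (m + 2 - l) * a l := by
    intro l hl
    have hl : l ≤ m + 2 := Nat.le_of_lt_succ (mem_range.mp hl)
    rw [Nat.add_sub_cancel, Nat.sub_sub_self hl, Nat.choose_symm hl]
  rw [sum_congr rfl hsymm, sum_range_succ, sum_range_succ, sum_range_succ]
  simp only [Nat.add_sub_cancel, Nat.sub_self, Nat.choose_self,
    Nat.add_sub_cancel_left, Nat.choose_succ_self_right, Nat.add_sub_add_left]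
  rw [Nat.choose_symm_add, Nat.cast_choose_two]
  norm_num [bernoulli_two, bernoulli_one]
  ring

end Bernoulli

theorem derivative_expNeg : d⁄dX ℝ expNeg = -expNeg := by
  rw [expNeg, derivative_rescale, derivative_exp, map_neg, map_one, neg_one_mul]

theorem constantCoeff_one_sub_expNeg : constantCoeff (1 - expNeg) = 0 := by
  rw [map_sub, map_one, ← coeff_zero_eq_constantCoeff_apply, expNeg, coeff_rescale, coeff_exp]
  simp

theorem coeff_one_sub_expNeg_pow_of_lt {n m : ℕ} (h : n < m) :
    coeff n ((1 - expNeg) ^ m) = 0 :=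
  X_pow_dvd_iff.mp (pow_dvd_pow_of_dvd (X_dvd_iff.mpr constantCoeff_one_sub_expNeg) m) n h

/-- With `z = 1 - e^{-t}` we have `dz/dt = 1 - z` and `(e^t - 1)(1 - z) = z`, so `(e^t - 1) d/dt`
is the Euler operator `z d/dz`. -/
theorem exp_sub_one_mul_derivative_one_sub_expNeg_pow (m : ℕ) :
    (exp ℝ - 1) * d⁄dX ℝ ((1 - expNeg) ^ m) = m * (1 - expNeg) ^ m := by
  have hz : (exp ℝ - 1) * d⁄dX ℝ (1 - expNeg) = 1 - expNeg := by
    rw [map_sub, derivative_one, derivative_expNeg, zero_sub, neg_neg, sub_mul, one_mul,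
      show exp ℝ * expNeg = 1 from exp_mul_exp_neg_eq_one]
  rw [derivative_pow]
  cases m with
  | zero => simp
  | succ m =>
    rw [Nat.add_sub_cancel]
    push_cast
    linear_combination ((m + 1 : ℝ⟦X⟧) * (1 - expNeg) ^ m) * hz

noncomputable def pbGFPartial (k : ℤ) (N : ℕ) : ℝ⟦X⟧ :=
  ∑ m ∈ range N, (1 / ((m : ℝ) + 1) ^ k) • (1 - expNeg) ^ m

theorem coeff_pbGF_eq_coeff_pbGFPartial {k : ℤ} {n N : ℕ} (h : n < N) :
    coeff n (pbGF k) = coeff n (pbGFPartial k N) := by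
  rw [pbGF, coeff_mk, pbGFPartial, map_sum]
  simp only [coeff_smul, smul_eq_mul]
  refine sum_subset (range_subset_range.mpr h) fun m _ hm => ?_
  rw [coeff_one_sub_expNeg_pow_of_lt (by simpa using hm), mul_zero]

theorem pbGFPartial_sub_one (k : ℤ) (N : ℕ) :
    pbGFPartial (k - 1) N = pbGFPartial k N + (exp ℝ - 1) * d⁄dX ℝ (pbGFPartial k N) := by
  simp only [pbGFPartial, map_sum, Derivation.map_smul, mul_sum, mul_smul_comm,
    exp_sub_one_mul_derivative_one_sub_expNeg_pow, ← sum_add_distrib]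
  refine sum_congr rfl fun m _ => ?_
  have hm : (m : ℝ) + 1 ≠ 0 := by positivity
  rw [← nsmul_eq_mul, ← Nat.cast_smul_eq_nsmul ℝ, smul_smul, ← add_smul, zpow_sub_one₀ hm]
  congr 1
  field_simp
  ring

theorem pbGF_sub_one (k : ℤ) :
    pbGF (k - 1) = pbGF k + (exp ℝ - 1) * d⁄dX ℝ (pbGF k) := by
  ext n
  -- both sides in degree `n` only see `pbGF k` up to degree `n + 1`
  have htrunc : trunc (n + 2) (pbGF k) = trunc (n + 2) (pbGFPartial k (n + 2)) := by
    ext j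
    simp only [coeff_trunc]
    split_ifs with hj
    exacts [coeff_pbGF_eq_coeff_pbGFPartial hj, rfl]
  rw [coeff_pbGF_eq_coeff_pbGFPartial (by omega : n < n + 2), pbGFPartial_sub_one, map_add,
    map_add, ← coeff_pbGF_eq_coeff_pbGFPartial (by omega : n < n + 2),
    coeff_mul_eq_coeff_trunc_mul_trunc _ _ n.lt_succ_self,
    coeff_mul_eq_coeff_trunc_mul_trunc _ (d⁄dX ℝ (pbGF k)) n.lt_succ_self,
    trunc_derivative, trunc_derivative, htrunc]

theorem hermGF_eq_expand (ν : ℝ) :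
    hermGF ν = expand 2 two_ne_zero (rescale (-ν / 2) (exp ℝ)) := by
  ext n
  rw [hermGF, coeff_mk, coeff_expand, coeff_rescale, coeff_exp]
  simp [even_iff_two_dvd, div_eq_mul_inv]

theorem derivative_hermGF (ν : ℝ) : d⁄dX ℝ (hermGF ν) = C (-ν) * X * hermGF ν := by
  conv_lhs => rw [hermGF_eq_expand]
  rw [expand_apply, derivative_subst (HasSubst.X_pow two_ne_zero),
    ← expand_apply 2 two_ne_zero, derivative_rescale, derivative_exp, map_mul, expand_C,
    ← hermGF_eq_expand, derivative_pow, derivative_X]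
  have hC : C (-ν) = C (-ν / 2) * (2 : ℝ⟦X⟧) := by
    rw [← map_ofNat C 2, ← map_mul, div_mul_cancel₀ _ two_ne_zero]
  rw [hC]
  ring

section HermitePolyBernoulli

variable (ν : ℝ) (k : ℤ) (x : ℝ)

noncomputable def hbGF : ℝ⟦X⟧ := hermGF ν * pbGF k * rescale x (exp ℝ)

theorem HB_eq_factorial_mul_coeff_hbGF (n : ℕ) :
    HB ν k n x = n.factorial * coeff n (hbGF ν k x) := rfl

theorem derivative_hbGF : d⁄dX ℝ (hbGF ν k x) =
    (C x - C ν * X) * hbGF ν k x + hermGF ν * d⁄dX ℝ (pbGF k) * rescale x (exp ℝ) := by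
  rw [hbGF, Derivation.leibniz, Derivation.leibniz, derivative_hermGF, derivative_rescale,
    derivative_exp]
  simp only [smul_eq_mul, map_neg]
  ring

theorem bernoulliPowerSeries_mul_hbGF_sub_one :
    bernoulliPowerSeries ℝ * hbGF ν (k - 1) x =
      bernoulliPowerSeries ℝ * hbGF ν k x + X * d⁄dX ℝ (hbGF ν k x) +
        C ν * (X * (X * hbGF ν k x)) - C x * (X * hbGF ν k x) := by
  rw [derivative_hbGF, hbGF, hbGF, pbGF_sub_one]
  linear_combination (hermGF ν * d⁄dX ℝ (pbGF k) * rescale x (exp ℝ)) *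
    bernoulliPowerSeries_mul_exp_sub_one ℝ

theorem sum_choose_bernoulli_mul_HB_sub_one (n : ℕ) :
    ∑ l ∈ range (n + 1), (n.choose l : ℝ) * bernoulli l * HB ν (k - 1) (n - l) x =
      ∑ l ∈ range (n + 1), (n.choose l : ℝ) * bernoulli l * HB ν k (n - l) x +
        n * HB ν k n x + ν * n * (n - 1 : ℕ) * HB ν k (n - 2) x - x * n * HB ν k (n - 1) x := by
  have hB (k : ℤ) : (n.factorial : ℝ) * coeff n (bernoulliPowerSeries ℝ * hbGF ν k x) =
      ∑ l ∈ range (n + 1), (n.choose l : ℝ) * bernoulli l * HB ν k (n - l) x := by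
    simp only [factorial_mul_coeff_mul, factorial_mul_coeff_bernoulliPowerSeries,
      HB_eq_factorial_mul_coeff_hbGF]
  have hD : (n.factorial : ℝ) * coeff n (X * d⁄dX ℝ (hbGF ν k x)) = n * HB ν k n x := by
    rw [coeff_X_mul_derivative, HB_eq_factorial_mul_coeff_hbGF]
    ring
  have hX : (n.factorial : ℝ) * coeff n (X * hbGF ν k x) = n * HB ν k (n - 1) x :=
    factorial_mul_coeff_X_mul _ n
  have hXX : (n.factorial : ℝ) * coeff n (X * (X * hbGF ν k x)) =
      n * (n - 1 : ℕ) * HB ν k (n - 2) x := by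
    rw [factorial_mul_coeff_X_mul, factorial_mul_coeff_X_mul, Nat.sub_sub,
      HB_eq_factorial_mul_coeff_hbGF]
    ring
  rw [← hB, ← hB, bernoulliPowerSeries_mul_hbGF_sub_one, ← hD]
  simp only [map_add, map_sub, coeff_C_mul]
  linear_combination ν * hXX - x * hX

end HermitePolyBernoulli

theorem HB_bernoulli_identity (ν : ℝ) (k : ℤ) (n : ℕ) (hn : 3 ≤ n) (x : ℝ) :
    ∑ l ∈ Finset.range (n + 1), (n.choose l : ℝ) * (bernoulli l : ℝ) * HB ν (k - 1) (n - l) x =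
      ((n : ℝ) + 1) * HB ν k n x - (n : ℝ) * (x + 1 / 2) * HB ν k (n - 1) x +
        (n : ℝ) * ((n : ℝ) - 1) * (ν + 1 / 12) * HB ν k (n - 2) x +
        ∑ l ∈ Finset.range (n - 2), (n.choose l : ℝ) * (bernoulli (n - l) : ℝ) * HB ν k l x := by
  rw [sum_choose_bernoulli_mul_HB_sub_one,
    sum_choose_bernoulli_mul_eq (fun j => HB ν k j x) (by omega : 2 ≤ n),
    Nat.cast_sub (by omega : 1 ≤ n)]
  push_cast
  ring
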